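/- arXiv:1112.0762 — 11 statements merged into one kernel-verified Lean document; each statement's English description precedes it below -/
import Mathlib

section
/- Let S be a nonzero subspace of V with orthogonal projection P_S, and let J be a subset of Fin n. Then the range of the partial trace Tr_{Jᶜ}(P_S) equals the supremum, over all positive semidefinite linear operators ρ on V whose range is contained in S, of the ranges of Tr_{Jᶜ}(ρ). (That is, the reduced spaces of S are exactly computed by the maximally mixed state on S.) -/
/-!
Setup: `n` particles with local dimensions `d : Fin n → ℕ`.
`EV d` is the `n`-particle inner product space `EuclideanSpace ℂ (Config d)`
of functions `(∀ i, Fin (d i)) → ℂ` with the standard inner product.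
For `J : Finset (Fin n)`, `PConfig d J` is the type of `J`-configurations and
`VJ d J` the corresponding space.  `merge` builds a full configuration,
`contr` is the contraction `ψ_b`, and `ptrace d J T` is the partial trace
`Tr_{Jᶜ}(T)`, defined through its matrix entries
`(a, a') ↦ ∑_b ⟪e_{merge a b}, T e_{merge a' b}⟫`.
-/

namespace GSS

variable {n : ℕ}

abbrev Config (d : Fin n → ℕ) : Type := ∀ i : Fin n, Fin (d i)

/-- The `n`-particle inner product space. -/
abbrev EV (d : Fin n → ℕ) : Type := EuclideanSpace ℂ (Config d)

abbrev PConfig (d : Fin n → ℕ) (J : Finset (Fin n)) : Type := ∀ i : J, Fin (d i.1)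

abbrev VJ (d : Fin n → ℕ) (J : Finset (Fin n)) : Type := PConfig d J → ℂ

/-- The full configuration equal to `a` on `J` and to `b` on `Jᶜ`. -/
def merge (d : Fin n → ℕ) (J : Finset (Fin n)) (a : PConfig d J) (b : PConfig d Jᶜ) :
    Config d := fun i =>
  if h : i ∈ J then a ⟨i, h⟩ else b ⟨i, Finset.mem_compl.mpr h⟩

/-- The contraction `ψ_b ∈ V_J` of `ψ ∈ V`: `ψ_b(a) = ψ(merge a b)`. -/
def contr (d : Fin n → ℕ) (J : Finset (Fin n)) (ψ : EV d) (b : PConfig d Jᶜ) :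
    VJ d J := fun a => ψ (merge d J a b)

/-- The partial trace `Tr_{Jᶜ}(T)`, the operator on `V_J` with matrix entries
`(a, a') ↦ ∑_b ⟪e_{merge a b}, T e_{merge a' b}⟫` in the standard basis. -/
noncomputable def ptrace (d : Fin n → ℕ) (J : Finset (Fin n)) (T : EV d →ₗ[ℂ] EV d) :
    VJ d J →ₗ[ℂ] VJ d J :=
  Matrix.toLin' (fun a a' : PConfig d J =>
    ∑ b : PConfig d Jᶜ,
      (inner ℂ (EuclideanSpace.single (merge d J a b) (1 : ℂ))
        (T (EuclideanSpace.single (merge d J a' b) (1 : ℂ))) : ℂ))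

end GSS

open GSS
open scoped ComplexOrder

/-- `ρ` is positive semidefinite: `⟪ρ ψ, ψ⟫ ≥ 0` (in the order of `ℂ`, hence
real and nonnegative) for every `ψ`.  -/
def IsPSD {n : ℕ} {d : Fin n → ℕ} (ρ : EV d →ₗ[ℂ] EV d) : Prop :=
  ∀ ψ : EV d, 0 ≤ (inner ℂ (ρ ψ) ψ : ℂ)

/-!
For a positive operator `σ`, `⟪φ, Tr_{Jᶜ}(σ) φ⟫ = ∑_b ⟪φ ⊗ e_b, σ (φ ⊗ e_b)⟫` is a sum of
nonnegative terms, so `Tr_{Jᶜ}(σ) φ = 0` forces `σ (φ ⊗ e_b) = 0` for every `b`. Hence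
`ker σ ≤ ker ρ` gives `ker Tr_{Jᶜ}(σ) ≤ ker Tr_{Jᶜ}(ρ)`, which for Hermitian operators is
`range Tr_{Jᶜ}(ρ) ≤ range Tr_{Jᶜ}(σ)`. A positive `ρ` with `range ρ ≤ S` has
`ker ρ = (range ρ)ᗮ ⊇ Sᗮ = ker P_S`, so its reduced range lies in that of `P_S`, and `P_S` is
itself such an operator.
-/

open scoped InnerProductSpace

namespace LinearMap

variable {𝕜 E : Type*} [RCLike 𝕜] [NormedAddCommGroup E] [InnerProductSpace 𝕜 E]
  [FiniteDimensional 𝕜 E]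

theorem IsPositive.apply_eq_zero_of_inner_eq_zero {T : E →ₗ[𝕜] E} (hT : T.IsPositive) {x : E}
    (hx : ⟪x, T x⟫_𝕜 = 0) : T x = 0 := by
  let b := stdOrthonormalBasis 𝕜 E
  have hrepr (y : E) : ⇑(b.toBasis.repr y) = b.repr y := funext (b.coe_toBasis_repr_apply y)
  have hTx := T.toMatrix_mulVec_repr b.toBasis b.toBasis x
  rw [hrepr, hrepr] at hTx
  rw [← b.repr.map_eq_zero_iff, ← WithLp.ofLp_eq_zero, ← hTx]
  rw [← b.repr.inner_map_map, EuclideanSpace.inner_eq_star_dotProduct, ← hTx,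
    dotProduct_comm] at hx
  exact (((posSemidef_toMatrix_iff b).mpr hT).dotProduct_mulVec_zero_iff _).mp hx

theorem IsSymmetric.range_le_range_of_ker_le {T U : E →ₗ[𝕜] E} (hT : T.IsSymmetric)
    (hU : U.IsSymmetric) (h : ker U ≤ ker T) : range T ≤ range U := by
  rw [← (range T).orthogonal_orthogonal, ← (range U).orthogonal_orthogonal,
    hT.orthogonal_range, hU.orthogonal_range]
  exact Submodule.orthogonal_le h

end LinearMap

theorem Matrix.IsHermitian.range_toLin'_le_of_ker_le {𝕜 ι : Type*} [RCLike 𝕜] [Fintype ι]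
    [DecidableEq ι] {A B : Matrix ι ι 𝕜} (hA : A.IsHermitian) (hB : B.IsHermitian)
    (h : LinearMap.ker (toLin' B) ≤ LinearMap.ker (toLin' A)) :
    LinearMap.range (toLin' A) ≤ LinearMap.range (toLin' B) := by
  have hE : LinearMap.range (toEuclideanLin A) ≤ LinearMap.range (toEuclideanLin B) :=
    (isSymmetric_toEuclideanLin_iff.mpr hA).range_le_range_of_ker_le
      (isSymmetric_toEuclideanLin_iff.mpr hB) fun y hy =>
        WithLp.ofLp_injective 2 (h (congrArg WithLp.ofLp hy))
  rintro _ ⟨x, rfl⟩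
  obtain ⟨y, hy⟩ := hE ⟨WithLp.toLp 2 x, rfl⟩
  exact ⟨WithLp.ofLp y, congrArg WithLp.ofLp hy⟩

theorem IsPSD.isPositive {n : ℕ} {d : Fin n → ℕ} {ρ : EV d →ₗ[ℂ] EV d} (hρ : IsPSD ρ) :
    ρ.IsPositive :=
  ρ.isPositive_iff.mpr ⟨(ρ.isSymmetric_iff_inner_map_self_real).mpr fun ψ =>
    Complex.conj_eq_iff_im.mpr (Complex.nonneg_iff.mp (hρ ψ)).2.symm, hρ⟩

namespace GSS

variable {n : ℕ} {d : Fin n → ℕ} {J : Finset (Fin n)}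

noncomputable def tensorSingle (φ : VJ d J) (b : PConfig d Jᶜ) : EV d :=
  ∑ a, φ a • EuclideanSpace.single (merge d J a b) 1

noncomputable def ptraceMatrix (d : Fin n → ℕ) (J : Finset (Fin n)) (T : EV d →ₗ[ℂ] EV d) :
    Matrix (PConfig d J) (PConfig d J) ℂ := fun a a' =>
  ∑ b : PConfig d Jᶜ, ⟪EuclideanSpace.single (merge d J a b) (1 : ℂ),
    T (EuclideanSpace.single (merge d J a' b) 1)⟫_ℂ

theorem ptrace_eq_toLin' (T : EV d →ₗ[ℂ] EV d) :
    ptrace d J T = Matrix.toLin' (ptraceMatrix d J T) := rfl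

theorem ptraceMatrix_isHermitian {T : EV d →ₗ[ℂ] EV d} (hT : T.IsSymmetric) :
    (ptraceMatrix d J T).IsHermitian := by
  ext a a'
  simp only [Matrix.conjTranspose_apply, ptraceMatrix, star_sum]
  refine Finset.sum_congr rfl fun b _ => ?_
  rw [← hT]
  exact inner_conj_symm _ _

theorem ptrace_apply (T : EV d →ₗ[ℂ] EV d) (φ : VJ d J) (a : PConfig d J) :
    ptrace d J T φ a = ∑ b, T (tensorSingle φ b) (merge d J a b) := by
  simp only [ptrace_eq_toLin', Matrix.toLin'_apply, Matrix.mulVec, dotProduct, ptraceMatrix,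
    EuclideanSpace.inner_single_left, tensorSingle, map_sum, map_smul, Finset.sum_mul]
  rw [Finset.sum_comm]
  simp [mul_comm]

theorem inner_tensorSingle_left (φ : VJ d J) (b : PConfig d Jᶜ) (ψ : EV d) :
    ⟪tensorSingle φ b, ψ⟫_ℂ = ∑ a, star (φ a) * ψ (merge d J a b) := by
  simp only [tensorSingle, sum_inner, inner_smul_left, EuclideanSpace.inner_single_left, map_one,
    one_mul]
  rfl

theorem star_dotProduct_ptrace (T : EV d →ₗ[ℂ] EV d) (φ : VJ d J) :
    star φ ⬝ᵥ ptrace d J T φ = ∑ b, ⟪tensorSingle φ b, T (tensorSingle φ b)⟫_ℂ := by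
  simp only [dotProduct, ptrace_apply, inner_tensorSingle_left, Finset.mul_sum, Pi.star_apply]
  exact Finset.sum_comm

theorem ker_ptrace_le {ρ σ : EV d →ₗ[ℂ] EV d} (hσ : σ.IsPositive)
    (h : LinearMap.ker σ ≤ LinearMap.ker ρ) :
    LinearMap.ker (ptrace d J σ) ≤ LinearMap.ker (ptrace d J ρ) := by
  intro φ hφ
  have hsum := star_dotProduct_ptrace σ φ
  rw [LinearMap.mem_ker.mp hφ, dotProduct_zero, eq_comm,
    Finset.sum_eq_zero_iff_of_nonneg fun b _ => hσ.inner_nonneg_right _] at hsum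
  have hρ (b : PConfig d Jᶜ) : ρ (tensorSingle φ b) = 0 :=
    h (hσ.apply_eq_zero_of_inner_eq_zero (hsum b (Finset.mem_univ b)))
  refine LinearMap.mem_ker.mpr (funext fun a => ?_)
  simp [ptrace_apply, hρ]

theorem range_ptrace_le {ρ σ : EV d →ₗ[ℂ] EV d} (hρ : ρ.IsSymmetric) (hσ : σ.IsPositive)
    (h : LinearMap.ker σ ≤ LinearMap.ker ρ) :
    LinearMap.range (ptrace d J ρ) ≤ LinearMap.range (ptrace d J σ) :=
  (ptraceMatrix_isHermitian hρ).range_toLin'_le_of_ker_le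
    (ptraceMatrix_isHermitian hσ.isSymmetric) (ker_ptrace_le hσ h)

end GSS

theorem stmt0_general (n : ℕ) (d : Fin n → ℕ)
    (S : Submodule ℂ (EV d)) (J : Finset (Fin n)) :
    LinearMap.range (ptrace d J (S.subtype ∘ₗ S.orthogonalProjectionOnto.toLinearMap)) =
      ⨆ ρ ∈ {ρ : EV d →ₗ[ℂ] EV d | IsPSD ρ ∧ LinearMap.range ρ ≤ S},
        LinearMap.range (ptrace d J ρ) := by
  rw [show S.subtype ∘ₗ S.orthogonalProjectionOnto.toLinearMap =
    (S.starProjection : EV d →ₗ[ℂ] EV d) from rfl]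
  have hP := S.isSymmetricProjection_starProjection.isPositive
  apply le_antisymm
  · exact le_iSup₂_of_le _ ⟨hP.inner_nonneg_left, S.range_starProjection.le⟩ le_rfl
  · refine iSup₂_le fun ρ ⟨hρ, hρS⟩ => GSS.range_ptrace_le hρ.isPositive.isSymmetric hP ?_
    calc LinearMap.ker (S.starProjection : EV d →ₗ[ℂ] EV d) = Sᗮ := S.ker_starProjection
      _ ≤ (LinearMap.range ρ)ᗮ := Submodule.orthogonal_le hρS
      _ = LinearMap.ker ρ := hρ.isPositive.isSymmetric.orthogonal_range

/-- the range of the partial trace of the orthogonal projection onto a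
nonzero subspace `S` equals the supremum of the ranges of the partial traces of all
positive semidefinite operators whose range is contained in `S`. -/
theorem stmt0 (n : ℕ) (hn : 1 ≤ n) (d : Fin n → ℕ)
    (S : Submodule ℂ (EV d)) (hS : S ≠ ⊥) (J : Finset (Fin n)) :
    LinearMap.range (ptrace d J (S.subtype ∘ₗ S.orthogonalProjectionOnto.toLinearMap)) =
      ⨆ ρ ∈ {ρ : EV d →ₗ[ℂ] EV d | IsPSD ρ ∧ LinearMap.range ρ ≤ S},
        LinearMap.range (ptrace d J ρ) :=
  stmt0_general n d S J
end

section
/- For every nonzero subspace S ≤ V: (i) red_J(MPI(L_k(S))) = red_J(S) for every k-element subset J of Fin n, so MPI(L_k(S)) is itself a pre-image of L_k(S); and (ii) every subspace S' ≤ V with red_J(S') = red_J(S) for all k-element subsets J satisfies S' ≤ MPI(L_k(S)). In particular S ≤ MPI(L_k(S)), and MPI(L_k(S)) is the maximal pre-image of L_k(S). -/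
/-!
Setup: `n` particles with local dimensions `d : Fin n → ℕ`.
`V d` is the `n`-particle space of functions `(∀ i, Fin (d i)) → ℂ`.
For `J : Finset (Fin n)`, `PConfig d J` is the type of `J`-configurations and
`VJ d J` the corresponding space.  `merge`, `contrL` (the contraction `ψ ↦ ψ_b`),
the reduced space `red d J S`, the tuple `Lk d S`, the maximal pre-image `MPI`,
and `k`-local frustration-free ground-state spaces are as in the paper.
-/

namespace GSS

variable {n : ℕ}

abbrev V (d : Fin n → ℕ) : Type := Config d → ℂ

/-- The contraction `ψ ↦ ψ_b`, as a linear map from `V d` to `VJ d J`. -/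
def contrL (d : Fin n → ℕ) (J : Finset (Fin n)) (b : PConfig d Jᶜ) :
    V d →ₗ[ℂ] VJ d J where
  toFun ψ := fun a => ψ (merge d J a b)
  map_add' _ _ := rfl
  map_smul' _ _ := rfl

/-- The reduced space `red_J(S)`: the span of all contractions `ψ_b` with `ψ ∈ S`. -/
noncomputable def red (d : Fin n → ℕ) (J : Finset (Fin n)) (S : Submodule ℂ (V d)) :
    Submodule ℂ (VJ d J) :=
  Submodule.span ℂ {φ | ∃ ψ ∈ S, ∃ b : PConfig d Jᶜ, φ = contrL d J b ψ}

/-- The `k`-reduced tuple `L_k(S) = (red_J(S))_J` (only the components with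
`J.card = k` are relevant). -/
noncomputable def Lk (d : Fin n → ℕ) (S : Submodule ℂ (V d)) :
    ∀ J : Finset (Fin n), Submodule ℂ (VJ d J) :=
  fun J => red d J S

/-- The maximal pre-image of a tuple `η`:
`{ψ : ψ_b ∈ η_J for every k-element subset J and every Jᶜ-configuration b}`. -/
noncomputable def MPI (d : Fin n → ℕ) (k : ℕ) (η : ∀ J : Finset (Fin n), Submodule ℂ (VJ d J)) :
    Submodule ℂ (V d) :=
  ⨅ (J : Finset (Fin n)) (_ : J.card = k) (b : PConfig d Jᶜ), (η J).comap (contrL d J b)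

/-- `G` is a `k`-local frustration-free ground-state space: `G` is nonzero and is
cut out by a family of subspaces `W_J ≤ V_J` via the contraction conditions. -/
def IsFFGroundSpace (d : Fin n → ℕ) (k : ℕ) (G : Submodule ℂ (V d)) : Prop :=
  G ≠ ⊥ ∧ ∃ W : ∀ J : Finset (Fin n), Submodule ℂ (VJ d J),
    G = ⨅ (J : Finset (Fin n)) (_ : J.card = k) (b : PConfig d Jᶜ), (W J).comap (contrL d J b)

end GSS

open GSS

/-- `MPI(L_k(S))` is itself a pre-image of `L_k(S)`, it contains every
pre-image (in particular `S` itself), so it is the maximal pre-image. -/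
theorem stmt4 (n : ℕ) (hn : 1 ≤ n) (d : Fin n → ℕ) (k : ℕ) (hk1 : 1 ≤ k) (hk2 : k ≤ n)
    (S : Submodule ℂ (V d)) (hS : S ≠ ⊥) :
    (∀ J : Finset (Fin n), J.card = k → red d J (MPI d k (Lk d S)) = red d J S) ∧
    (∀ S' : Submodule ℂ (V d),
      (∀ J : Finset (Fin n), J.card = k → red d J S' = red d J S) →
      S' ≤ MPI d k (Lk d S)) ∧
    S ≤ MPI d k (Lk d S) := by
  have hSle : S ≤ MPI d k (Lk d S) := by
    intro ψ hψ
    simp only [MPI, Submodule.mem_iInf, Submodule.mem_comap]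
    intro J hJ b
    exact Submodule.subset_span ⟨ψ, hψ, b, rfl⟩
  have hPart2 : ∀ S' : Submodule ℂ (V d),
      (∀ J, J.card = k → red d J S' = red d J S) → S' ≤ MPI d k (Lk d S) := by
    intro S' h ψ hψ
    simp only [MPI, Submodule.mem_iInf, Submodule.mem_comap]
    intro J hJ b
    show _ ∈ Lk d S J
    rw [Lk, ← h J hJ]
    exact Submodule.subset_span ⟨ψ, hψ, b, rfl⟩
  refine ⟨?_, hPart2, hSle⟩
  intro J hJ
  apply le_antisymm
  · apply Submodule.span_le.mpr
    rintro φ ⟨ψ, hψ, b, rfl⟩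
    simp only [MPI, Submodule.mem_iInf, Submodule.mem_comap] at hψ
    exact hψ J hJ b
  · exact Submodule.span_mono (fun φ ⟨ψ, hψ, b, h⟩ => ⟨ψ, hSle hψ, b, h⟩)
end

section
/- For all subspaces S₁, S₂ ≤ V and every subset J ⊆ Fin n, red_J(S₁ ⊔ S₂) = red_J(S₁) ⊔ red_J(S₂). Consequently, the set Θ_k is closed under the componentwise join of tuples: L_k(S₁) ∨ L_k(S₂) = L_k(S₁ ⊔ S₂), so Θ_k with the componentwise join is an idempotent commutative semigroup (a join-semilattice). -/
open GSS


lemma red_mono {n : ℕ} (d : Fin n → ℕ) (J : Finset (Fin n)) {S T : Submodule ℂ (V d)}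
    (h : S ≤ T) : red d J S ≤ red d J T := by
  apply Submodule.span_mono
  rintro φ ⟨ψ, hψ, b, rfl⟩
  exact ⟨ψ, h hψ, b, rfl⟩

lemma red_sup {n : ℕ} (d : Fin n → ℕ) (J : Finset (Fin n)) (S₁ S₂ : Submodule ℂ (V d)) :
    red d J (S₁ ⊔ S₂) = red d J S₁ ⊔ red d J S₂ := by
  apply le_antisymm
  · apply Submodule.span_le.mpr
    rintro φ ⟨ψ, hψ, b, rfl⟩
    obtain ⟨ψ₁, h₁, ψ₂, h₂, rfl⟩ := Submodule.mem_sup.mp hψ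
    rw [map_add]
    exact Submodule.add_mem_sup
      (Submodule.subset_span ⟨ψ₁, h₁, b, rfl⟩)
      (Submodule.subset_span ⟨ψ₂, h₂, b, rfl⟩)
  · exact sup_le (red_mono d J le_sup_left) (red_mono d J le_sup_right)

/-- reduced spaces turn joins of subspaces into joins of reduced spaces,
`red_J(S₁ ⊔ S₂) = red_J(S₁) ⊔ red_J(S₂)`; consequently `Θ_k` is closed under the
componentwise join: `L_k(S₁) ∨ L_k(S₂) = L_k(S₁ ⊔ S₂)`. -/
theorem stmt5 (n : ℕ) (hn : 1 ≤ n) (d : Fin n → ℕ) (k : ℕ) (hk1 : 1 ≤ k) (hk2 : k ≤ n)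
    (S₁ S₂ : Submodule ℂ (V d)) :
    (∀ J : Finset (Fin n), red d J (S₁ ⊔ S₂) = red d J S₁ ⊔ red d J S₂) ∧
    (∀ J : Finset (Fin n), Lk d S₁ J ⊔ Lk d S₂ J = Lk d (S₁ ⊔ S₂) J) := by
  refine ⟨fun J => red_sup d J S₁ S₂, fun J => (red_sup d J S₁ S₂).symm⟩
end

section
/- If S is a nonzero subspace of V such that MPI(L_k(S)) is one-dimensional, then L_k(S) is an atom of Θ_k; that is, every nonzero subspace S' ≤ V with L_k(S') ≤ L_k(S) (componentwise inclusion) satisfies L_k(S') = L_k(S). -/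
open GSS


lemma le_MPI {n : ℕ} (d : Fin n → ℕ) (k : ℕ) (S : Submodule ℂ (V d)) :
    S ≤ MPI d k (Lk d S) := by
  intro ψ hψ
  simp only [MPI, Submodule.mem_iInf, Submodule.mem_comap]
  intro J _ b
  exact Submodule.subset_span ⟨ψ, hψ, b, rfl⟩

lemma MPI_mono {n : ℕ} (d : Fin n → ℕ) (k : ℕ)
    {η η' : ∀ J : Finset (Fin n), Submodule ℂ (VJ d J)}
    (h : ∀ J : Finset (Fin n), J.card = k → η J ≤ η' J) :
    MPI d k η ≤ MPI d k η' := by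
  refine iInf_mono fun J => iInf_mono' fun hJ => ⟨hJ, iInf_mono fun b => ?_⟩
  exact Submodule.comap_mono (h J hJ)

lemma eq_MPI {n : ℕ} (d : Fin n → ℕ) {T M : Submodule ℂ (V d)}
    (hT : T ≠ ⊥) (hle : T ≤ M) (hdim : Module.finrank ℂ M = 1) : T = M := by
  apply Submodule.eq_of_le_of_finrank_le hle
  rw [hdim]
  exact Nat.one_le_iff_ne_zero.mpr (fun h0 => hT (Submodule.finrank_eq_zero.mp h0))

/-- if `MPI(L_k(S))` is one-dimensional then `L_k(S)` is an atom of `Θ_k`: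
every nonzero `S'` with `L_k(S') ≤ L_k(S)` satisfies `L_k(S') = L_k(S)`. -/
theorem stmt7 (n : ℕ) (hn : 1 ≤ n) (d : Fin n → ℕ) (k : ℕ) (hk1 : 1 ≤ k) (hk2 : k ≤ n)
    (S : Submodule ℂ (V d)) (hS : S ≠ ⊥)
    (hdim : Module.finrank ℂ (MPI d k (Lk d S)) = 1) :
    ∀ S' : Submodule ℂ (V d), S' ≠ ⊥ →
      (∀ J : Finset (Fin n), J.card = k → red d J S' ≤ red d J S) →
      ∀ J : Finset (Fin n), J.card = k → red d J S' = red d J S := by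
  intro S' hS' hle J hJ
  have hSeq : S = MPI d k (Lk d S) := eq_MPI d hS (le_MPI d k S) hdim
  have hS'le : S' ≤ MPI d k (Lk d S) :=
    le_trans (le_MPI d k S') (MPI_mono d k hle)
  have hS'eq : S' = MPI d k (Lk d S) := eq_MPI d hS' hS'le hdim
  rw [hS'eq, ← hSeq]
end

section
/- Assume d i ≥ 2 for all i and 1 ≤ k ≤ n. Let ψ ∈ V be a nonzero product vector, i.e. ψ(x) = ∏_{i : Fin n} f_i(x i) for functions f_i : Fin (d i) → ℂ with each f_i nonzero. Then there exist nonzero subspaces S₁, S₂ ≤ V such that L_k(span{ψ}) ≤ L_k(S₁) ∨ L_k(S₂), yet L_k(span{ψ}) ≰ L_k(S₁) and L_k(span{ψ}) ≰ L_k(S₂). In other words, the element of Θ_k whose maximal pre-image is a single product state is not a join prime of Θ_k. -/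
open GSS

/-!
Write `ψ = f_i ⊗ R` for a site `i` of some `k`-element set `J`, and split `f_i = g₁ + g₂` with
`f_i` proportional to neither `g₁` nor `g₂` (possible since `d i ≥ 2`). Every contraction of `ψ`
is the sum of the corresponding contractions of `g₁ ⊗ R` and `g₂ ⊗ R`, which gives the join
bound. On the other hand, reading a `J`-local vector along a line in direction `i` maps the
reduced space of `g ⊗ R` into `span {g}`, but sends a contraction of `ψ` to a nonzero multiple
of `f_i`; so `red_J(span {ψ})` fits under neither piece.
-/

lemma mem_span_singleton_symm {K M : Type*} [DivisionRing K] [AddCommGroup M] [Module K M]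
    {u v : M} (hv : v ≠ 0) (h : v ∈ K ∙ u) : u ∈ K ∙ v := by
  simpa using mem_span_insert_exchange (s := ∅) (by simpa using h) (by simpa using hv)

lemma exists_add_eq_notMem_span_singleton {K M : Type*} [DivisionRing K] [AddCommGroup M]
    [Module K M] {v : M} (hv : v ≠ 0) (hvM : K ∙ v ≠ ⊤) :
    ∃ g₁ g₂ : M, g₁ ≠ 0 ∧ g₂ ≠ 0 ∧ g₁ + g₂ = v ∧ v ∉ K ∙ g₁ ∧ v ∉ K ∙ g₂ := by
  obtain ⟨u, -, hu⟩ := SetLike.exists_of_lt (lt_top_iff_ne_top.mpr hvM)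
  refine ⟨u, v - u, ?_, ?_, add_sub_cancel u v, ?_, ?_⟩
  · rintro rfl
    exact hu (Submodule.zero_mem _)
  · intro h
    exact hu (sub_eq_zero.mp h ▸ Submodule.mem_span_singleton_self v)
  · exact fun h => hu (mem_span_singleton_symm hv h)
  · intro h
    have := mem_span_singleton_symm hv h
    exact hu (by simpa using Submodule.sub_mem _ (Submodule.mem_span_singleton_self v) this)

namespace GSS

variable {n : ℕ} {d : Fin n → ℕ}

lemma red_le_iff {J : Finset (Fin n)} {S : Submodule ℂ (V d)} {P : Submodule ℂ (VJ d J)} :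
    red d J S ≤ P ↔ ∀ ψ ∈ S, ∀ b, contrL d J b ψ ∈ P := by
  simp only [red, Submodule.span_le, Set.subset_def, Set.mem_ofPred_eq, SetLike.mem_coe]
  exact ⟨fun h ψ hψ b => h _ ⟨ψ, hψ, b, rfl⟩, fun h _ ⟨ψ, hψ, b, hφ⟩ => hφ ▸ h ψ hψ b⟩

lemma contrL_mem_red {J : Finset (Fin n)} {S : Submodule ℂ (V d)} {ψ : V d} (hψ : ψ ∈ S)
    (b : PConfig d Jᶜ) : contrL d J b ψ ∈ red d J S :=
  red_le_iff.mp le_rfl ψ hψ b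

lemma red_span_add_le (J : Finset (Fin n)) (x y : V d) :
    red d J (ℂ ∙ (x + y)) ≤ red d J (ℂ ∙ x) ⊔ red d J (ℂ ∙ y) := by
  refine red_le_iff.mpr fun ψ hψ b => ?_
  obtain ⟨c, rfl⟩ := Submodule.mem_span_singleton.mp hψ
  rw [smul_add, map_add]
  exact Submodule.add_mem_sup
    (contrL_mem_red (Submodule.smul_mem _ c (Submodule.mem_span_singleton_self x)) b)
    (contrL_mem_red (Submodule.smul_mem _ c (Submodule.mem_span_singleton_self y)) b)

lemma merge_restrict (J : Finset (Fin n)) (x : Config d) :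
    merge d J (fun i => x i) (fun i => x i) = x := by
  funext i
  by_cases hi : i ∈ J <;> simp [merge, hi]

lemma merge_update {J : Finset (Fin n)} (a : PConfig d J) (b : PConfig d Jᶜ) {i : Fin n}
    (hi : i ∈ J) (t : Fin (d i)) :
    merge d J (Function.update a ⟨i, hi⟩ t) b = Function.update (merge d J a b) i t := by
  funext j
  by_cases hji : j = i
  · subst hji
    simp [merge, hi]
  · by_cases hj : j ∈ J <;> simp [merge, hj, hji]

/-- When `R` does not depend on the `i`-th coordinate, this is `g ⊗ R` with `g` on site `i`. -/
def siteMul (i : Fin n) (g : Fin (d i) → ℂ) (R : V d) : V d := fun x => g (x i) * R x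

lemma siteMul_add (i : Fin n) (g h : Fin (d i) → ℂ) (R : V d) :
    siteMul i (g + h) R = siteMul i g R + siteMul i h R := by
  funext x
  simp only [siteMul, Pi.add_apply, add_mul]

lemma siteMul_ne_zero {i : Fin n} {g : Fin (d i) → ℂ} {R : V d}
    (hR : ∀ x t, R (Function.update x i t) = R x) (hg : g ≠ 0) (hR0 : R ≠ 0) :
    siteMul i g R ≠ 0 := by
  obtain ⟨s, hs⟩ := Function.ne_iff.mp hg
  obtain ⟨x, hx⟩ := Function.ne_iff.mp hR0
  intro h
  have := congrFun h (Function.update x i s)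
  simp only [siteMul, Function.update_self, hR, Pi.zero_apply, mul_eq_zero] at this
  exact this.elim hs hx

lemma funLeft_update_contrL_siteMul {J : Finset (Fin n)} {i : Fin n} (hi : i ∈ J)
    {R : V d} (hR : ∀ x t, R (Function.update x i t) = R x)
    (a : PConfig d J) (b : PConfig d Jᶜ) (g : Fin (d i) → ℂ) :
    LinearMap.funLeft ℂ ℂ (Function.update a ⟨i, hi⟩) (contrL d J b (siteMul i g R)) =
      R (merge d J a b) • g := by
  funext t
  simp [LinearMap.funLeft_apply, contrL, siteMul, merge_update, hR, mul_comm]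

lemma not_red_span_siteMul_le {J : Finset (Fin n)} {i : Fin n} (hi : i ∈ J)
    {R : V d} (hR : ∀ x t, R (Function.update x i t) = R x) (hR0 : R ≠ 0)
    {f g : Fin (d i) → ℂ} (hfg : f ∉ ℂ ∙ g) :
    ¬ red d J (ℂ ∙ siteMul i f R) ≤ red d J (ℂ ∙ siteMul i g R) := by
  obtain ⟨x, hx⟩ := Function.ne_iff.mp hR0
  set Φ := LinearMap.funLeft ℂ ℂ (Function.update (fun j : J => x j) ⟨i, hi⟩)
  have hred : red d J (ℂ ∙ siteMul i g R) ≤ (ℂ ∙ g).comap Φ := by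
    refine red_le_iff.mpr fun ψ hψ b => ?_
    obtain ⟨c, rfl⟩ := Submodule.mem_span_singleton.mp hψ
    rw [Submodule.mem_comap, map_smul, map_smul, funLeft_update_contrL_siteMul hi hR]
    exact Submodule.smul_mem _ _ (Submodule.smul_mem _ _ (Submodule.mem_span_singleton_self g))
  intro hle
  have hmem := hred (hle (contrL_mem_red (Submodule.mem_span_singleton_self _) fun j => x j))
  rw [Submodule.mem_comap, funLeft_update_contrL_siteMul hi hR, merge_restrict] at hmem
  exact hfg ((Submodule.smul_mem_iff _ hx).mp hmem)

lemma prod_eq_siteMul (f : ∀ i : Fin n, Fin (d i) → ℂ) (i : Fin n) :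
    (fun x : Config d => ∏ j, f j (x j)) =
      siteMul i (f i) fun x => ∏ j ∈ Finset.univ.erase i, f j (x j) := by
  funext x
  exact (Finset.mul_prod_erase _ (fun j => f j (x j)) (Finset.mem_univ i)).symm

lemma prod_erase_update (f : ∀ i : Fin n, Fin (d i) → ℂ) (i : Fin n) (x : Config d)
    (t : Fin (d i)) :
    ∏ j ∈ Finset.univ.erase i, f j (Function.update x i t j) =
      ∏ j ∈ Finset.univ.erase i, f j (x j) :=
  Finset.prod_congr rfl fun j hj => by rw [Function.update_of_ne (Finset.ne_of_mem_erase hj)]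

lemma prod_erase_ne_zero {f : ∀ i : Fin n, Fin (d i) → ℂ} (hf : ∀ i, f i ≠ 0) (i : Fin n) :
    (fun x : Config d => ∏ j ∈ Finset.univ.erase i, f j (x j)) ≠ 0 := by
  choose x hx using fun j => Function.ne_iff.mp (hf j)
  exact Function.ne_iff.mpr ⟨x, Finset.prod_ne_zero_iff.mpr fun j _ => hx j⟩

end GSS

theorem stmt8_general (n : ℕ) (d : Fin n → ℕ) (hd : ∀ i, 2 ≤ d i)
    (k : ℕ) (hk1 : 1 ≤ k) (hk2 : k ≤ n)
    (f : ∀ i : Fin n, Fin (d i) → ℂ) (hf : ∀ i, f i ≠ 0)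
    (ψ : V d) (hψ : ψ = fun x => ∏ i : Fin n, f i (x i)) :
    ∃ S₁ S₂ : Submodule ℂ (V d), S₁ ≠ ⊥ ∧ S₂ ≠ ⊥ ∧
      (∀ J : Finset (Fin n), J.card = k →
        red d J (Submodule.span ℂ {ψ}) ≤ red d J S₁ ⊔ red d J S₂) ∧
      ¬ (∀ J : Finset (Fin n), J.card = k →
        red d J (Submodule.span ℂ {ψ}) ≤ red d J S₁) ∧
      ¬ (∀ J : Finset (Fin n), J.card = k →
        red d J (Submodule.span ℂ {ψ}) ≤ red d J S₂) := by
  obtain ⟨J, -, hJ⟩ := Finset.exists_subset_card_eq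
    (s := (Finset.univ : Finset (Fin n))) (n := k) (by rwa [Finset.card_univ, Fintype.card_fin])
  obtain ⟨i, hi⟩ := Finset.card_pos.mp (hJ ▸ hk1)
  set R : V d := fun x => ∏ j ∈ Finset.univ.erase i, f j (x j)
  have hR : ∀ x t, R (Function.update x i t) = R x := prod_erase_update f i
  have hR0 : R ≠ 0 := prod_erase_ne_zero hf i
  have hfi : ℂ ∙ f i ≠ ⊤ := fun h => by
    have := finrank_span_singleton (K := ℂ) (hf i)
    rw [h, finrank_top, Module.finrank_fin_fun] at this
    exact absurd (hd i) (by omega)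
  obtain ⟨g₁, g₂, hg₁, hg₂, hsum, hfg₁, hfg₂⟩ :=
    exists_add_eq_notMem_span_singleton (hf i) hfi
  have hψi : ψ = siteMul i (f i) R := hψ.trans (prod_eq_siteMul f i)
  have hψsum : ψ = siteMul i g₁ R + siteMul i g₂ R := by rw [hψi, ← hsum, siteMul_add]
  refine ⟨ℂ ∙ siteMul i g₁ R, ℂ ∙ siteMul i g₂ R, ?_, ?_, fun J _ => hψsum ▸ red_span_add_le J _ _,
    fun h => ?_, fun h => ?_⟩
  · exact Submodule.span_singleton_eq_bot.not.mpr (siteMul_ne_zero hR hg₁ hR0)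
  · exact Submodule.span_singleton_eq_bot.not.mpr (siteMul_ne_zero hR hg₂ hR0)
  · exact not_red_span_siteMul_le hi hR hR0 hfg₁ (hψi ▸ h J hJ)
  · exact not_red_span_siteMul_le hi hR hR0 hfg₂ (hψi ▸ h J hJ)

/-- the element of `Θ_k` whose maximal pre-image is a single product
state is not a join prime of `Θ_k`. -/
theorem stmt8 (n : ℕ) (hn : 1 ≤ n) (d : Fin n → ℕ) (hd : ∀ i, 2 ≤ d i)
    (k : ℕ) (hk1 : 1 ≤ k) (hk2 : k ≤ n)
    (f : ∀ i : Fin n, Fin (d i) → ℂ) (hf : ∀ i, f i ≠ 0)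
    (ψ : V d) (hψ : ψ = fun x => ∏ i : Fin n, f i (x i)) :
    ∃ S₁ S₂ : Submodule ℂ (V d), S₁ ≠ ⊥ ∧ S₂ ≠ ⊥ ∧
      (∀ J : Finset (Fin n), J.card = k →
        red d J (Submodule.span ℂ {ψ}) ≤ red d J S₁ ⊔ red d J S₂) ∧
      ¬ (∀ J : Finset (Fin n), J.card = k →
        red d J (Submodule.span ℂ {ψ}) ≤ red d J S₁) ∧
      ¬ (∀ J : Finset (Fin n), J.card = k →
        red d J (Submodule.span ℂ {ψ}) ≤ red d J S₂) :=
  stmt8_general n d hd k hk1 hk2 f hf ψ hψ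
end

section
/- Assume d i ≥ 2 for all i and 1 ≤ k ≤ n. There is no join prime in Θ_k: for every nonzero subspace S ≤ V there exist nonzero subspaces S₁, S₂ ≤ V such that L_k(S) ≤ L_k(S₁) ∨ L_k(S₂), yet L_k(S) ≰ L_k(S₁) and L_k(S) ≰ L_k(S₂). -/
/-!
Fix a `k`-subset `J` and a nonzero contraction `φ = ψ_b ∈ red_J(S)`. Every subspace `W ≤ V_J` has
a largest subspace of `V` whose `J`-contractions all lie in `W`, and `red_J` is left adjoint to
this assignment, so `red_J` preserves joins. Since `dim V_J ≥ 2`, there are nonzero `W₁, W₂ ≤ V_J`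
with `W₁ ⊔ W₂ = V_J` and `φ ∉ W₁, W₂`. Their largest pre-images `S₁, S₂` still span `V`, because
`V` is the direct product of copies of `V_J` indexed by the `Jᶜ`-configurations, so
`L_k(S) ≤ L_k(V) = L_k(S₁) ∨ L_k(S₂)`, while `φ` witnesses `red_J(S) ≰ red_J(Sᵢ)`.
-/

namespace Submodule

variable {K E : Type*} [DivisionRing K] [AddCommGroup E] [Module K E]

theorem exists_sup_eq_top_notMem_notMem {x : E} (hE : 1 < Module.finrank K E) (hx : x ≠ 0) :
    ∃ W₁ W₂ : Submodule K E, W₁ ≠ ⊥ ∧ W₂ ≠ ⊥ ∧ W₁ ⊔ W₂ = ⊤ ∧ x ∉ W₁ ∧ x ∉ W₂ := by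
  obtain ⟨C, hC⟩ := (K ∙ x).exists_isCompl
  have hCx : ∀ y ∈ C, y ∈ K ∙ x → y = 0 := fun y hyC hyx =>
    (Submodule.disjoint_def.mp hC.disjoint) y hyx hyC
  obtain ⟨c, hcC, hc⟩ : ∃ c ∈ C, c ≠ 0 := by
    refine C.ne_bot_iff.mp fun hbot => ?_
    have htop : K ∙ x = ⊤ := by simpa [hbot] using hC.sup_eq_top
    have := finrank_span_singleton (K := K) hx
    rw [htop, finrank_top] at this
    omega
  -- `x = (x + c) - c` lies in `C ⊔ K ∙ (x + c)` but in neither summand.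
  refine ⟨C, K ∙ (x + c), C.ne_bot_iff.mpr ⟨c, hcC, hc⟩, ?_, ?_, ?_, ?_⟩
  · rw [Ne, span_singleton_eq_bot]
    intro hxc
    refine hc (hCx c hcC ?_)
    rw [eq_neg_of_add_eq_zero_right hxc]
    exact neg_mem (mem_span_singleton_self x)
  · refine eq_top_iff.mpr (hC.sup_eq_top ▸ sup_le ?_ le_sup_left)
    have hx' := sub_mem (mem_sup_right (mem_span_singleton_self (x + c))) (mem_sup_left hcC)
    rwa [add_sub_cancel_right, ← span_singleton_le_iff_mem] at hx'
  · exact fun hxC => hx (hCx x hxC (mem_span_singleton_self x))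
  · rintro hx'
    obtain ⟨a, ha⟩ := mem_span_singleton.mp hx'
    have hac : a • c = (1 - a) • x := by
      rw [sub_smul, one_smul, eq_sub_iff_add_eq, add_comm, ← smul_add, ha]
    have hac0 : a • c = 0 :=
      hCx _ (C.smul_mem a hcC) (hac ▸ smul_mem _ _ (mem_span_singleton_self x))
    have ha0 : a = 0 := (smul_eq_zero.mp hac0).resolve_right hc
    exact hx (by rw [← ha, ha0, zero_smul])

end Submodule

namespace GSS

variable {n : ℕ} (d : Fin n → ℕ) (J : Finset (Fin n))

def restr (x : Config d) : PConfig d J := fun i => x i.1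

def contrEquiv : V d ≃ₗ[ℂ] (PConfig d Jᶜ → VJ d J) where
  toFun ψ b := contrL d J b ψ
  invFun F x := F (restr d Jᶜ x) (restr d J x)
  map_add' _ _ := rfl
  map_smul' _ _ := rfl
  left_inv ψ := funext fun x => congrArg ψ <| funext fun i => by
    unfold merge restr; split <;> rfl
  right_inv F := funext₂ fun b a => by
    change F (restr d Jᶜ (merge d J a b)) (restr d J (merge d J a b)) = F b a
    congr 1 <;> funext i
    · exact dif_neg (Finset.mem_compl.mp i.2)
    · exact dif_pos i.2

@[simp]
lemma contrEquiv_apply (ψ : V d) (b : PConfig d Jᶜ) : contrEquiv d J ψ b = contrL d J b ψ := rfl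

def comapContr (W : Submodule ℂ (VJ d J)) : Submodule ℂ (V d) :=
  ⨅ b : PConfig d Jᶜ, W.comap (contrL d J b)

variable {d J}

lemma mem_comapContr {W : Submodule ℂ (VJ d J)} {ψ : V d} :
    ψ ∈ comapContr d J W ↔ ∀ b, contrL d J b ψ ∈ W := by
  simp only [comapContr, Submodule.mem_iInf, Submodule.mem_comap]

variable (d J)

theorem gc_red_comapContr : GaloisConnection (red d J) (comapContr d J) := fun S W => by
  rw [red, Submodule.span_le]
  constructor
  · exact fun h ψ hψ => mem_comapContr.mpr fun b => h ⟨ψ, hψ, b, rfl⟩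
  · rintro h _ ⟨ψ, hψ, b, rfl⟩
    exact mem_comapContr.mp (h hψ) b

variable {d J}

theorem comapContr_sup_eq_top {W₁ W₂ : Submodule ℂ (VJ d J)} (h : W₁ ⊔ W₂ = ⊤) :
    comapContr d J W₁ ⊔ comapContr d J W₂ = ⊤ := by
  refine eq_top_iff.mpr fun ψ _ => ?_
  choose F₁ hF₁ F₂ hF₂ hF using fun b =>
    Submodule.mem_sup.mp (h.symm ▸ Submodule.mem_top : contrL d J b ψ ∈ W₁ ⊔ W₂)
  have hψ : ψ = (contrEquiv d J).symm F₁ + (contrEquiv d J).symm F₂ := by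
    rw [← map_add, LinearEquiv.eq_symm_apply]
    exact funext fun b => (hF b).symm
  rw [hψ]
  refine Submodule.add_mem_sup (mem_comapContr.mpr fun b => ?_) (mem_comapContr.mpr fun b => ?_)
  · rw [← contrEquiv_apply, LinearEquiv.apply_symm_apply]
    exact hF₁ b
  · rw [← contrEquiv_apply, LinearEquiv.apply_symm_apply]
    exact hF₂ b

theorem comapContr_ne_bot [Nonempty (PConfig d Jᶜ)] {W : Submodule ℂ (VJ d J)} (hW : W ≠ ⊥) :
    comapContr d J W ≠ ⊥ := by
  classical
  obtain ⟨φ, hφW, hφ⟩ := W.ne_bot_iff.mp hW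
  obtain ⟨b₀⟩ := ‹Nonempty (PConfig d Jᶜ)›
  refine (Submodule.ne_bot_iff _).mpr ⟨(contrEquiv d J).symm (Pi.single b₀ φ), ?_, ?_⟩
  · refine mem_comapContr.mpr fun b => ?_
    rw [← contrEquiv_apply, LinearEquiv.apply_symm_apply]
    rcases eq_or_ne b b₀ with rfl | hb
    · simpa using hφW
    · simp [hb]
  · simpa using hφ

theorem one_lt_finrank_VJ (hd : ∀ i, 2 ≤ d i) (hJ : J.Nonempty) :
    1 < Module.finrank ℂ (VJ d J) := by
  have (i : Fin n) : Nontrivial (Fin (d i)) := Fin.nontrivial_iff_two_le.mpr (hd i)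
  obtain ⟨i, hi⟩ := hJ
  have := Pi.nontrivial_at (f := fun j : J => Fin (d j)) ⟨i, hi⟩
  rw [Module.finrank_fintype_fun_eq_card]
  exact Fintype.one_lt_card

end GSS

open GSS

theorem stmt9_general (n : ℕ) (d : Fin n → ℕ) (hd : ∀ i, 2 ≤ d i)
    (k : ℕ) (hk1 : 1 ≤ k) (hk2 : k ≤ n)
    (S : Submodule ℂ (V d)) (hS : S ≠ ⊥) :
    ∃ S₁ S₂ : Submodule ℂ (V d), S₁ ≠ ⊥ ∧ S₂ ≠ ⊥ ∧
      (∀ J : Finset (Fin n), J.card = k → red d J S ≤ red d J S₁ ⊔ red d J S₂) ∧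
      ¬ (∀ J : Finset (Fin n), J.card = k → red d J S ≤ red d J S₁) ∧
      ¬ (∀ J : Finset (Fin n), J.card = k → red d J S ≤ red d J S₂) := by
  obtain ⟨ψ, hψS, hψ⟩ := S.ne_bot_iff.mp hS
  obtain ⟨c, hc⟩ := Function.ne_iff.mp hψ
  obtain ⟨J, -, hJ⟩ := (Finset.univ : Finset (Fin n)).exists_subset_card_eq (by simpa using hk2)
  set φ := contrEquiv d J ψ (restr d Jᶜ c)
  have hφS : φ ∈ red d J S := Submodule.subset_span ⟨ψ, hψS, _, rfl⟩
  have hφ : φ ≠ 0 := fun h => hc <| by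
    rw [← congrFun ((contrEquiv d J).symm_apply_apply ψ) c]
    exact congrFun h (restr d J c)
  obtain ⟨W₁, W₂, hW₁, hW₂, hW, hφW₁, hφW₂⟩ := Submodule.exists_sup_eq_top_notMem_notMem
    (one_lt_finrank_VJ hd (Finset.card_pos.mp (by omega))) hφ
  have : Nonempty (PConfig d Jᶜ) := ⟨fun i => ⟨0, by have := hd i; omega⟩⟩
  refine ⟨comapContr d J W₁, comapContr d J W₂, comapContr_ne_bot hW₁, comapContr_ne_bot hW₂,
    fun J' _ => ?_, fun h => hφW₁ ?_, fun h => hφW₂ ?_⟩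
  · rw [← (gc_red_comapContr d J').l_sup, comapContr_sup_eq_top hW]
    exact (gc_red_comapContr d J').monotone_l le_top
  · exact (gc_red_comapContr d J).l_u_le W₁ (h J hJ hφS)
  · exact (gc_red_comapContr d J).l_u_le W₂ (h J hJ hφS)

/-- there is no join prime in `Θ_k`. -/
theorem stmt9 (n : ℕ) (hn : 1 ≤ n) (d : Fin n → ℕ) (hd : ∀ i, 2 ≤ d i)
    (k : ℕ) (hk1 : 1 ≤ k) (hk2 : k ≤ n)
    (S : Submodule ℂ (V d)) (hS : S ≠ ⊥) :
    ∃ S₁ S₂ : Submodule ℂ (V d), S₁ ≠ ⊥ ∧ S₂ ≠ ⊥ ∧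
      (∀ J : Finset (Fin n), J.card = k → red d J S ≤ red d J S₁ ⊔ red d J S₂) ∧
      ¬ (∀ J : Finset (Fin n), J.card = k → red d J S ≤ red d J S₁) ∧
      ¬ (∀ J : Finset (Fin n), J.card = k → red d J S ≤ red d J S₂) :=
  stmt9_general n d hd k hk1 hk2 S hS
end

section
/- Every element of Θ_k is a finite join of join-irreducible elements: for every nonzero subspace S ≤ V there exist finitely many nonzero subspaces S₁, …, S_m ≤ V such that each L_k(S_i) is join irreducible in Θ_k and, for every k-element subset J of Fin n, red_J(S) = red_J(S₁) ⊔ ⋯ ⊔ red_J(S_m). -/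
open GSS

/-- `L_k(S)` is join irreducible in `Θ_k`: whenever `L_k(S) = L_k(S₁) ∨ L_k(S₂)`
with `L_k(S₁), L_k(S₂) ∈ Θ_k`, one of them equals `L_k(S)`. -/
def JoinIrred {n : ℕ} (d : Fin n → ℕ) (k : ℕ) (S : Submodule ℂ (V d)) : Prop :=
  ∀ S₁ S₂ : Submodule ℂ (V d), S₁ ≠ ⊥ → S₂ ≠ ⊥ →
    (∀ J : Finset (Fin n), J.card = k → red d J S = red d J S₁ ⊔ red d J S₂) →
    (∀ J : Finset (Fin n), J.card = k → red d J S = red d J S₁) ∨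
    (∀ J : Finset (Fin n), J.card = k → red d J S = red d J S₂)


private noncomputable def mes {n : ℕ} (d : Fin n → ℕ) (k : ℕ) (S : Submodule ℂ (V d)) : ℕ :=
  ∑ J ∈ Finset.univ.filter (fun J : Finset (Fin n) => J.card = k),
    Module.finrank ℂ (red d J S)

private theorem mes_lt {n : ℕ} (d : Fin n → ℕ) (k : ℕ) (S S' : Submodule ℂ (V d))
    (hle : ∀ J : Finset (Fin n), J.card = k → red d J S' ≤ red d J S)
    (hne : ∃ J : Finset (Fin n), J.card = k ∧ red d J S' ≠ red d J S) :
    mes d k S' < mes d k S := by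
  obtain ⟨J₀, hJ₀, hne⟩ := hne
  apply Finset.sum_lt_sum
  · intro J hJ
    simp only [Finset.mem_filter] at hJ
    exact Submodule.finrank_mono (hle J hJ.2)
  · refine ⟨J₀, by simp [hJ₀], ?_⟩
    exact Submodule.finrank_lt_finrank_of_lt (lt_of_le_of_ne (hle J₀ hJ₀) hne)

private theorem key {n : ℕ} (d : Fin n → ℕ) (k : ℕ) :
    ∀ N : ℕ, ∀ S : Submodule ℂ (V d), S ≠ ⊥ → mes d k S ≤ N →
    ∃ (m : ℕ) (Ss : Fin m → Submodule ℂ (V d)),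
      (∀ i, Ss i ≠ ⊥) ∧ (∀ i, JoinIrred d k (Ss i)) ∧
      ∀ J : Finset (Fin n), J.card = k → red d J S = ⨆ i, red d J (Ss i) := by
  intro N
  induction N using Nat.strong_induction_on with
  | _ N ih =>
    intro S hS hN
    by_cases hJI : JoinIrred d k S
    · exact ⟨1, fun _ => S, fun _ => hS, fun _ => hJI,
        fun J _ => (iSup_const).symm⟩
    · simp only [JoinIrred, not_forall] at hJI
      obtain ⟨S₁, S₂, h₁, h₂, hjoin, hor⟩ := hJI
      push_neg at hor
      obtain ⟨hne₁, hne₂⟩ := hor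
      obtain ⟨J₁, hJ₁, hne₁⟩ := hne₁
      obtain ⟨J₂, hJ₂, hne₂⟩ := hne₂
      have hle₁ : ∀ J : Finset (Fin n), J.card = k → red d J S₁ ≤ red d J S :=
        fun J hJ => (hjoin J hJ) ▸ le_sup_left
      have hle₂ : ∀ J : Finset (Fin n), J.card = k → red d J S₂ ≤ red d J S :=
        fun J hJ => (hjoin J hJ) ▸ le_sup_right
      have hlt₁ : mes d k S₁ < mes d k S :=
        mes_lt d k S S₁ hle₁ ⟨J₁, hJ₁, fun h => hne₁ h.symm⟩
      have hlt₂ : mes d k S₂ < mes d k S :=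
        mes_lt d k S S₂ hle₂ ⟨J₂, hJ₂, fun h => hne₂ h.symm⟩
      obtain ⟨m₁, Ss₁, hb₁, hi₁, hs₁⟩ :=
        ih (mes d k S₁) (lt_of_lt_of_le hlt₁ hN) S₁ h₁ le_rfl
      obtain ⟨m₂, Ss₂, hb₂, hi₂, hs₂⟩ :=
        ih (mes d k S₂) (lt_of_lt_of_le hlt₂ hN) S₂ h₂ le_rfl
      refine ⟨m₁ + m₂, Fin.addCases Ss₁ Ss₂, ?_, ?_, ?_⟩
      · intro i
        refine Fin.addCases (fun j => ?_) (fun j => ?_) i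
        · simpa using hb₁ j
        · simpa using hb₂ j
      · intro i
        refine Fin.addCases (fun j => ?_) (fun j => ?_) i
        · simpa using hi₁ j
        · simpa using hi₂ j
      · intro J hJ
        have : (⨆ i : Fin (m₁ + m₂), red d J (Fin.addCases Ss₁ Ss₂ i))
            = (⨆ i : Fin m₁, red d J (Ss₁ i)) ⊔ ⨆ i : Fin m₂, red d J (Ss₂ i) := by
          rw [← finSumFinEquiv.iSup_comp (g := fun i => red d J (Fin.addCases Ss₁ Ss₂ i)),
            iSup_sum]
          simp
        rw [this, hjoin J hJ, hs₁ J hJ, hs₂ J hJ]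

/-- every element of `Θ_k` is a finite join of join-irreducible
elements of `Θ_k`. -/
theorem stmt10 (n : ℕ) (hn : 1 ≤ n) (d : Fin n → ℕ) (k : ℕ) (hk1 : 1 ≤ k) (hk2 : k ≤ n)
    (S : Submodule ℂ (V d)) (hS : S ≠ ⊥) :
    ∃ (m : ℕ) (Ss : Fin m → Submodule ℂ (V d)),
      (∀ i, Ss i ≠ ⊥) ∧ (∀ i, JoinIrred d k (Ss i)) ∧
      ∀ J : Finset (Fin n), J.card = k → red d J S = ⨆ i, red d J (Ss i) := by
  exact key d k (mes d k S) S hS le_rfl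
end

section
/- For a nonzero subspace S ≤ V, MPI(L_k(S)) = S if and only if S is a k-local FF ground-state space. -/
open GSS

/-- `MPI(L_k(S)) = S` iff `S` is a `k`-local FF ground-state space. -/
theorem stmt11 (n : ℕ) (hn : 1 ≤ n) (d : Fin n → ℕ) (k : ℕ) (hk1 : 1 ≤ k) (hk2 : k ≤ n)
    (S : Submodule ℂ (V d)) (hS : S ≠ ⊥) :
    MPI d k (Lk d S) = S ↔ IsFFGroundSpace d k S := by
  constructor
  · intro h
    exact ⟨hS, Lk d S, h.symm⟩
  · rintro ⟨-, W, hW⟩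
    apply le_antisymm
    · conv_rhs => rw [hW]
      refine le_iInf fun J => le_iInf fun hJ => le_iInf fun b => ?_
      have h1 : MPI d k (Lk d S) ≤ (Lk d S J).comap (contrL d J b) :=
        iInf_le_of_le J (iInf_le_of_le hJ (iInf_le _ b))
      refine h1.trans (Submodule.comap_mono ?_)
      refine Submodule.span_le.mpr ?_
      rintro φ ⟨ψ, hψ, b', rfl⟩
      have hψ' := hψ
      rw [hW] at hψ'
      exact (Submodule.mem_iInf _).mp
        ((Submodule.mem_iInf _).mp ((Submodule.mem_iInf _).mp hψ' J) hJ) b'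
    · intro ψ hψ
      simp only [MPI, Submodule.mem_iInf, Submodule.mem_comap]
      intro J hJ b
      exact Submodule.subset_span ⟨ψ, hψ, b, rfl⟩
end

section
/- Let T be a nonempty set of nonzero subspaces of V that is join-closed at the level of reduced tuples: for all S₁, S₂ ∈ T there exists S₃ ∈ T with red_J(S₃) = red_J(S₁) ⊔ red_J(S₂) for every k-element subset J of Fin n. Then the subspace ⨆_{S ∈ T} MPI(L_k(S)) is a k-local FF ground-state space. -/
open GSS

/-- if `T` is a nonempty set of nonzero subspaces whose reduced tuples
are closed under joins, then `⨆_{S ∈ T} MPI(L_k(S))` is a `k`-local FF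
ground-state space (the subsemilattice corresponds to a ground-state space). -/
theorem stmt12 (n : ℕ) (hn : 1 ≤ n) (d : Fin n → ℕ) (k : ℕ) (hk1 : 1 ≤ k) (hk2 : k ≤ n)
    (T : Set (Submodule ℂ (V d))) (hne : T.Nonempty) (h0 : ∀ S ∈ T, S ≠ ⊥)
    (hjoin : ∀ S₁ ∈ T, ∀ S₂ ∈ T, ∃ S₃ ∈ T,
      ∀ J : Finset (Fin n), J.card = k → red d J S₃ = red d J S₁ ⊔ red d J S₂) :
    IsFFGroundSpace d k (⨆ S ∈ T, MPI d k (Lk d S)) := by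
  classical
  set Jk : Finset (Finset (Fin n)) := Finset.univ.filter (fun J => J.card = k) with hJk
  set f : Submodule ℂ (V d) → ℕ :=
    fun S => ∑ J ∈ Jk, Module.finrank ℂ (red d J S) with hf
  have hneim : (f '' T).Nonempty := hne.image f
  have hbdd : BddAbove (f '' T) := by
    refine ⟨∑ J ∈ Jk, Module.finrank ℂ (VJ d J), ?_⟩
    rintro m ⟨S, hS, rfl⟩
    exact Finset.sum_le_sum fun J _ => Submodule.finrank_le _
  obtain ⟨Sm, hSm, hfSm⟩ : ∃ S ∈ T, f S = sSup (f '' T) := by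
    obtain ⟨S, hS, hfs⟩ := Nat.sSup_mem hneim hbdd
    exact ⟨S, hS, hfs⟩
  have hmax : ∀ S ∈ T, f S ≤ f Sm := by
    intro S hS
    rw [hfSm]
    exact le_csSup hbdd ⟨S, hS, rfl⟩
  -- Sm dominates every S ∈ T at the level of reduced spaces
  have hdom : ∀ S ∈ T, ∀ J : Finset (Fin n), J.card = k → red d J S ≤ red d J Sm := by
    intro S hS J hJ
    obtain ⟨S₃, hS₃T, hS₃⟩ := hjoin Sm hSm S hS
    have hle : ∀ J' ∈ Jk, red d J' Sm ≤ red d J' S₃ := by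
      intro J' hJ'
      rw [hS₃ J' (by simpa [hJk] using hJ')]
      exact le_sup_left
    have hrle : ∀ J' ∈ Jk, Module.finrank ℂ (red d J' Sm) ≤ Module.finrank ℂ (red d J' S₃) :=
      fun J' hJ' => Submodule.finrank_mono (hle J' hJ')
    have heqsum : f Sm = f S₃ := le_antisymm (Finset.sum_le_sum hrle) (hmax S₃ hS₃T)
    have hJmem : J ∈ Jk := by simp [hJk, hJ]
    have heq : Module.finrank ℂ (red d J Sm) = Module.finrank ℂ (red d J S₃) :=
      (Finset.sum_eq_sum_iff_of_le hrle).mp heqsum J hJmem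
    have hSmeq : red d J Sm = red d J S₃ :=
      Submodule.eq_of_le_of_finrank_le (hle J hJmem) heq.ge
    rw [hSmeq, hS₃ J hJ]
    exact le_sup_right
  -- the sup equals MPI (Lk Sm)
  have hMPIle : ∀ S ∈ T, MPI d k (Lk d S) ≤ MPI d k (Lk d Sm) := by
    intro S hS
    refine le_iInf fun J => le_iInf fun hJ => le_iInf fun b => ?_
    refine le_trans (iInf_le_of_le J (iInf_le_of_le hJ (iInf_le _ b))) ?_
    exact Submodule.comap_mono (hdom S hS J hJ)
  have key : (⨆ S ∈ T, MPI d k (Lk d S)) = MPI d k (Lk d Sm) := by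
    apply le_antisymm
    · exact iSup_le fun S => iSup_le fun hS => hMPIle S hS
    · exact le_iSup_of_le Sm (le_iSup_of_le hSm le_rfl)
  -- Sm is contained in its own MPI
  have hSmle : Sm ≤ MPI d k (Lk d Sm) := by
    refine le_iInf fun J => le_iInf fun hJ => le_iInf fun b => ?_
    intro ψ hψ
    exact Submodule.subset_span ⟨ψ, hψ, b, rfl⟩
  constructor
  · rw [key]
    intro hbot
    exact h0 Sm hSm (le_bot_iff.mp (hbot ▸ hSmle))
  · exact ⟨Lk d Sm, key⟩
end

section
/- If S₀ is a nonzero subspace of V such that L_k(S₀) is an atom of Θ_k, then M := MPI(L_k(S₀)) is a k-local FF ground-state space that is minimal: every k-local FF ground-state space G with G ≤ M satisfies G = M. -/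
open GSS

/-- if `L_k(S₀)` is an atom of `Θ_k`, then `MPI(L_k(S₀))` is a minimal
`k`-local FF ground-state space. -/
theorem stmt13 (n : ℕ) (hn : 1 ≤ n) (d : Fin n → ℕ) (k : ℕ) (hk1 : 1 ≤ k) (hk2 : k ≤ n)
    (S₀ : Submodule ℂ (V d)) (hS₀ : S₀ ≠ ⊥)
    (hatom : ∀ S' : Submodule ℂ (V d), S' ≠ ⊥ →
      (∀ J : Finset (Fin n), J.card = k → red d J S' ≤ red d J S₀) →
      ∀ J : Finset (Fin n), J.card = k → red d J S' = red d J S₀) :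
    IsFFGroundSpace d k (MPI d k (Lk d S₀)) ∧
    ∀ G : Submodule ℂ (V d), IsFFGroundSpace d k G →
      G ≤ MPI d k (Lk d S₀) → G = MPI d k (Lk d S₀) := by

  have memMPI : ∀ (η : ∀ J : Finset (Fin n), Submodule ℂ (VJ d J)) (ψ : V d),
      ψ ∈ MPI d k η ↔ ∀ J : Finset (Fin n), J.card = k → ∀ b : PConfig d Jᶜ,
        contrL d J b ψ ∈ η J := by
    intro η ψ
    simp only [MPI, Submodule.mem_iInf, Submodule.mem_comap]
  have mem_red : ∀ (J : Finset (Fin n)) (S : Submodule ℂ (V d)) (ψ : V d), ψ ∈ S →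
      ∀ b : PConfig d Jᶜ, contrL d J b ψ ∈ red d J S := by
    intro J S ψ hψ b
    exact Submodule.subset_span ⟨ψ, hψ, b, rfl⟩
  have hS₀M : S₀ ≤ MPI d k (Lk d S₀) := by
    intro ψ hψ
    rw [memMPI]
    intro J _ b
    exact mem_red J S₀ ψ hψ b
  have hMne : MPI d k (Lk d S₀) ≠ ⊥ := by
    intro h
    exact hS₀ (le_bot_iff.mp (h ▸ hS₀M))
  refine ⟨⟨hMne, Lk d S₀, rfl⟩, ?_⟩
  intro G hG hGM
  obtain ⟨hGne, W, hW⟩ := hG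
  -- membership in G
  have memG : ∀ ψ : V d, ψ ∈ G ↔ ∀ J : Finset (Fin n), J.card = k →
      ∀ b : PConfig d Jᶜ, contrL d J b ψ ∈ W J := by
    intro ψ
    rw [hW]
    simp only [Submodule.mem_iInf, Submodule.mem_comap]
  -- red_J(G) ≤ red_J(S₀) for card-k J
  have hle : ∀ J : Finset (Fin n), J.card = k → red d J G ≤ red d J S₀ := by
    intro J hJ
    apply Submodule.span_le.mpr
    rintro φ ⟨ψ, hψ, b, rfl⟩
    exact (memMPI (Lk d S₀) ψ).mp (hGM hψ) J hJ b
  have heq := hatom G hGne hle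
  have hredW : ∀ J : Finset (Fin n), J.card = k → red d J G ≤ W J := by
    intro J hJ
    apply Submodule.span_le.mpr
    rintro φ ⟨ψ, hψ, b, rfl⟩
    exact (memG ψ).mp hψ J hJ b
  refine le_antisymm hGM ?_
  intro ψ hψ
  rw [memG]
  intro J hJ b
  have : contrL d J b ψ ∈ red d J S₀ := (memMPI (Lk d S₀) ψ).mp hψ J hJ b
  exact hredW J hJ (heq J hJ ▸ this)
end

section
/- If G is a one-dimensional k-local FF ground-state space (i.e., G is the unique ground state of some k-local frustration-free Hamiltonian), then L_k(G) is an atom of Θ_k: every nonzero subspace S' ≤ V with L_k(S') ≤ L_k(G) satisfies L_k(S') = L_k(G). -/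
open GSS

/-- if `G` is a one-dimensional `k`-local FF ground-state space
(the unique ground state of some `k`-local FF Hamiltonian), then `L_k(G)` is an
atom of `Θ_k`. -/
theorem stmt17 (n : ℕ) (hn : 1 ≤ n) (d : Fin n → ℕ) (k : ℕ) (hk1 : 1 ≤ k) (hk2 : k ≤ n)
    (G : Submodule ℂ (V d)) (hG : IsFFGroundSpace d k G)
    (hdim : Module.finrank ℂ G = 1) :
    ∀ S' : Submodule ℂ (V d), S' ≠ ⊥ →
      (∀ J : Finset (Fin n), J.card = k → red d J S' ≤ red d J G) →
      ∀ J : Finset (Fin n), J.card = k → red d J S' = red d J G := by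
  obtain ⟨hGne, W, hGdef⟩ := hG
  intro S' hS' hle
  -- contractions of elements of G lie in W J
  have hred : ∀ J : Finset (Fin n), J.card = k → red d J G ≤ W J := by
    intro J hJ
    apply Submodule.span_le.mpr
    rintro φ ⟨ψ, hψ, b, rfl⟩
    rw [hGdef] at hψ
    simp only [Submodule.mem_iInf, Submodule.mem_comap] at hψ
    exact hψ J hJ b
  -- hence S' ≤ G
  have hSG : S' ≤ G := by
    intro ψ hψ
    rw [hGdef]
    simp only [Submodule.mem_iInf, Submodule.mem_comap]
    intro J hJ b
    exact hred J hJ (hle J hJ (Submodule.subset_span ⟨ψ, hψ, b, rfl⟩))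
  have : S' = G := by
    haveI : FiniteDimensional ℂ (V d) := by infer_instance
    apply Submodule.eq_of_le_of_finrank_le hSG
    rw [hdim]
    exact Submodule.one_le_finrank_iff.mpr hS'
  intro J hJ
  rw [this]
end
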